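/- arXiv:quant-ph/0509140 — 4 statements merged into one kernel-verified Lean document; each statement's English description precedes it below -/
import Mathlib

section
/- Let a be a real number with 0 < a < 1/2. Then lim_{n→∞} ( ∑_{k=0}^{⌊na⌋} C(n,k) ) / C(n, ⌊na⌋) = (1−a)/(1−2a). -/
open Finset Filter

private noncomputable def bpsrM (a : ℝ) (n : ℕ) : ℕ := ⌊(n : ℝ) * a⌋₊

private noncomputable def bpsrF (a : ℝ) (n j : ℕ) : ℝ :=
  if j ≤ bpsrM a n then (n.choose (bpsrM a n - j) : ℝ) / (n.choose (bpsrM a n) : ℝ) else 0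

private lemma bpsr_choose_ratio (n k : ℕ) (hk1 : 1 ≤ k) (hkn : k ≤ n) :
    (n.choose (k-1) : ℝ) = (n.choose k) * k / ((n : ℝ) - k + 1) := by
  have h := Nat.choose_succ_right_eq n (k-1)
  rw [Nat.sub_add_cancel hk1] at h
  have hcast : ((n - (k-1) : ℕ) : ℝ) = (n:ℝ) - k + 1 := by
    have h2 : n - (k-1) = n - k + 1 := by omega
    rw [h2]
    push_cast [Nat.cast_sub hkn]
    ring
  have h' : (n.choose k : ℝ) * k = (n.choose (k-1) : ℝ) * ((n:ℝ) - k + 1) := by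
    rw [← hcast]
    exact_mod_cast h
  have hd : (n:ℝ) - k + 1 ≠ 0 := by
    have : (k:ℝ) ≤ n := by exact_mod_cast hkn
    nlinarith
  field_simp
  linarith [h']

variable {a : ℝ}

private lemma bpsrM_le_real (ha0 : 0 < a) (n : ℕ) : (bpsrM a n : ℝ) ≤ (n : ℝ) * a := by
  exact Nat.floor_le (by positivity)

private lemma bpsrM_le (ha0 : 0 < a) (ha : a < 1 / 2) (n : ℕ) : bpsrM a n ≤ n := by
  have h1 : (bpsrM a n : ℝ) ≤ (n : ℝ) * a := bpsrM_le_real ha0 n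
  have h2 : (n : ℝ) * a ≤ n := by nlinarith [Nat.cast_nonneg (α := ℝ) n]
  exact_mod_cast h1.trans h2

private lemma bpsrF_zero (ha0 : 0 < a) (ha : a < 1 / 2) (n : ℕ) : bpsrF a n 0 = 1 := by
  have hc : (n.choose (bpsrM a n) : ℝ) ≠ 0 := by
    exact_mod_cast Nat.choose_pos (bpsrM_le ha0 ha n) |>.ne'
  simp [bpsrF, hc]

private lemma bpsrF_step (ha0 : 0 < a) (ha : a < 1 / 2) {n j : ℕ} (hj : j + 1 ≤ bpsrM a n) :
    bpsrF a n (j+1)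
      = bpsrF a n j * (((bpsrM a n : ℝ) - j) / ((n:ℝ) - bpsrM a n + j + 1)) := by
  have hmn : bpsrM a n ≤ n := bpsrM_le ha0 ha n
  set m := bpsrM a n with hm
  have hk1 : 1 ≤ m - j := by omega
  have hkn : m - j ≤ n := by omega
  have h := bpsr_choose_ratio n (m - j) hk1 hkn
  have h2 : m - (j+1) = (m - j) - 1 := by omega
  rw [bpsrF, bpsrF, if_pos hj, if_pos (by omega : j ≤ m), ← hm, h2, h]
  have hc1 : ((m - j : ℕ):ℝ) = (m:ℝ) - j := by
    push_cast [Nat.cast_sub (by omega : j ≤ m)]; ring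
  rw [hc1]
  have hc2 : (n:ℝ) - ((m:ℝ) - j) + 1 = (n:ℝ) - m + j + 1 := by ring
  rw [hc2]
  ring

private lemma bpsrF_nonneg (n j : ℕ) : 0 ≤ bpsrF a n j := by
  unfold bpsrF; split <;> positivity

private lemma bpsr_ratio_le (ha0 : 0 < a) (ha : a < 1 / 2) {n j : ℕ} (hj : j + 1 ≤ bpsrM a n) :
    ((bpsrM a n : ℝ) - j) / ((n:ℝ) - bpsrM a n + j + 1) ≤ a / (1 - a) := by
  have hmn : bpsrM a n ≤ n := bpsrM_le ha0 ha n
  have hn1 : 1 ≤ n := le_trans (by omega) hmn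
  have hM : (bpsrM a n : ℝ) ≤ (n : ℝ) * a := bpsrM_le_real ha0 n
  have hMN : (bpsrM a n : ℝ) ≤ n := by exact_mod_cast hmn
  have hJ : (j : ℝ) + 1 ≤ bpsrM a n := by exact_mod_cast hj
  have hN1 : (1 : ℝ) ≤ n := by exact_mod_cast hn1
  have hj0 : (0:ℝ) ≤ j := Nat.cast_nonneg j
  have hdpos : (0:ℝ) < (n:ℝ) - bpsrM a n + j + 1 := by nlinarith
  have h1a : (0:ℝ) < 1 - a := by linarith
  rw [div_le_div_iff₀ hdpos h1a]
  nlinarith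

private lemma bpsrF_le (ha0 : 0 < a) (ha : a < 1 / 2) (n j : ℕ) : bpsrF a n j ≤ (a / (1 - a)) ^ j := by
  induction j with
  | zero => rw [bpsrF_zero ha0 ha]; norm_num
  | succ j ih =>
    by_cases hj : j + 1 ≤ bpsrM a n
    · rw [bpsrF_step ha0 ha hj, pow_succ]
      have h1 := bpsr_ratio_le ha0 ha hj
      have h2 : (0:ℝ) ≤ ((bpsrM a n : ℝ) - j) / ((n:ℝ) - bpsrM a n + j + 1) := by
        have hmn : bpsrM a n ≤ n := bpsrM_le ha0 ha n
        have hMN : (bpsrM a n : ℝ) ≤ n := by exact_mod_cast hmn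
        have hJ : (j : ℝ) + 1 ≤ bpsrM a n := by exact_mod_cast hj
        apply div_nonneg <;> nlinarith
      have hqj : (0:ℝ) ≤ (a / (1 - a)) ^ j :=
        pow_nonneg (div_nonneg ha0.le (by linarith)) j
      exact mul_le_mul ih h1 h2 hqj
    · rw [bpsrF, if_neg hj]
      exact pow_nonneg (div_nonneg ha0.le (by linarith)) _

private lemma bpsrM_tendsto_atTop (ha0 : 0 < a) : Tendsto (fun n : ℕ => bpsrM a n) atTop atTop := by
  exact tendsto_nat_floor_atTop.comp (tendsto_natCast_atTop_atTop.atTop_mul_const ha0)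

private lemma bpsrM_div_tendsto (ha0 : 0 < a) :
    Tendsto (fun n : ℕ => (bpsrM a n : ℝ) / n) atTop (nhds a) := by
  apply tendsto_of_tendsto_of_tendsto_of_le_of_le'
    (g := fun n : ℕ => a - 1 / (n:ℝ)) (h := fun _ : ℕ => a)
  · simpa using tendsto_const_nhds.sub (tendsto_one_div_atTop_nhds_zero_nat (𝕜 := ℝ))
  · exact tendsto_const_nhds
  · filter_upwards [eventually_ge_atTop 1] with n hn
    have hnpos : (0:ℝ) < n := by exact_mod_cast hn
    have h1 : (n:ℝ) * a - 1 ≤ bpsrM a n := by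
      have h2 : (n:ℝ) * a < (bpsrM a n : ℝ) + 1 := by
        exact_mod_cast Nat.lt_floor_add_one ((n:ℝ) * a)
      linarith
    have hinv : (1 / (n:ℝ)) * n = 1 := by field_simp
    rw [sub_le_iff_le_add, div_add' _ _ _ hnpos.ne', le_div_iff₀ hnpos]
    nlinarith
  · filter_upwards [eventually_ge_atTop 1] with n hn
    have hnpos : (0:ℝ) < n := by exact_mod_cast hn
    have h1 : (bpsrM a n : ℝ) ≤ (n:ℝ) * a := bpsrM_le_real ha0 n
    rw [div_le_iff₀ hnpos]
    linarith

private lemma bpsr_ratio_tendsto (ha0 : 0 < a) (ha : a < 1 / 2) (j : ℕ) :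
    Tendsto (fun n : ℕ => ((bpsrM a n : ℝ) - j) / ((n:ℝ) - bpsrM a n + j + 1))
      atTop (nhds (a / (1 - a))) := by
  have h1a : (1:ℝ) - a ≠ 0 := by nlinarith
  have hnum : Tendsto (fun n : ℕ => (bpsrM a n : ℝ)/n - (j:ℝ)/n) atTop (nhds a) := by
    simpa using (bpsrM_div_tendsto ha0).sub (tendsto_const_div_atTop_nhds_zero_nat (j:ℝ))
  have hden : Tendsto (fun n : ℕ => 1 - (bpsrM a n : ℝ)/n + ((j:ℝ)+1)/n)
      atTop (nhds (1 - a)) := by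
    simpa using (tendsto_const_nhds.sub (bpsrM_div_tendsto ha0)).add
      (tendsto_const_div_atTop_nhds_zero_nat (((j+1 : ℕ)) : ℝ) |>.congr (by intro n; push_cast; ring))
  have := hnum.div hden h1a
  apply this.congr'
  filter_upwards [eventually_ge_atTop 1] with n hn
  have hnpos : (0:ℝ) < n := by exact_mod_cast hn
  have hne : (n:ℝ) ≠ 0 := hnpos.ne'
  rw [Pi.div_apply]
  field_simp
  ring

private lemma bpsrF_tendsto (ha0 : 0 < a) (ha : a < 1 / 2) (j : ℕ) :
    Tendsto (fun n : ℕ => bpsrF a n j) atTop (nhds ((a / (1 - a)) ^ j)) := by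
  induction j with
  | zero =>
    simp only [pow_zero]
    exact tendsto_const_nhds.congr (fun n => (bpsrF_zero ha0 ha n).symm)
  | succ j ih =>
    have h := ih.mul (bpsr_ratio_tendsto ha0 ha j)
    rw [pow_succ]
    apply h.congr'
    filter_upwards [(bpsrM_tendsto_atTop ha0).eventually_ge_atTop (j+1)] with n hn
    exact (bpsrF_step ha0 ha hn).symm

/-- **Ratio of a partial sum of binomial coefficients to its largest term**
(Appendix D).  For `0 < a < 1/2`,
`lim_{n→∞} (∑_{k=0}^{⌊na⌋} C(n,k)) / C(n,⌊na⌋) = (1−a)/(1−2a)`. -/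
theorem binomial_partial_sum_ratio (a : ℝ) (ha0 : 0 < a) (ha : a < 1 / 2) :
    Tendsto (fun n : ℕ =>
        (∑ k ∈ Finset.range (⌊(n : ℝ) * a⌋₊ + 1), (n.choose k : ℝ)) /
          (n.choose ⌊(n : ℝ) * a⌋₊ : ℝ))
      atTop (nhds ((1 - a) / (1 - 2 * a))) := by
  set q := a / (1 - a) with hq
  have h1a : (0:ℝ) < 1 - a := by nlinarith
  have hq0 : 0 ≤ q := by positivity
  have hq1 : q < 1 := by
    rw [hq, div_lt_one h1a]; nlinarith
  -- the limit value
  have hval : ∑' j : ℕ, q ^ j = (1 - a) / (1 - 2 * a) := by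
    rw [tsum_geometric_of_lt_one hq0 hq1]
    have h2a : (1:ℝ) - 2 * a ≠ 0 := by nlinarith
    have : 1 - q = (1 - 2*a) / (1 - a) := by
      rw [hq]; field_simp; ring
    rw [this, inv_div]
  rw [← hval]
  have hmain : Tendsto (fun n : ℕ => ∑' j : ℕ, bpsrF a n j) atTop
      (nhds (∑' j : ℕ, q ^ j)) := by
    apply tendsto_tsum_of_dominated_convergence (bound := fun j => q ^ j)
    · exact summable_geometric_of_lt_one hq0 hq1
    · exact fun j => bpsrF_tendsto ha0 ha j
    · filter_upwards with n j
      rw [Real.norm_eq_abs, abs_of_nonneg (bpsrF_nonneg n j)]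
      exact bpsrF_le ha0 ha n j
  apply hmain.congr
  intro n
  have hmn : bpsrM a n ≤ n := bpsrM_le ha0 ha n
  have heq1 : (∑' j : ℕ, bpsrF a n j) = ∑ j ∈ Finset.range (bpsrM a n + 1), bpsrF a n j := by
    apply tsum_eq_sum
    intro j hj
    rw [Finset.mem_range, not_lt] at hj
    rw [bpsrF, if_neg (by omega)]
  rw [heq1]
  have heq2 : ∀ j ∈ Finset.range (bpsrM a n + 1),
      bpsrF a n j = (n.choose (bpsrM a n - j) : ℝ) / (n.choose (bpsrM a n) : ℝ) := by
    intro j hj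
    rw [Finset.mem_range] at hj
    rw [bpsrF, if_pos (by omega)]
  rw [Finset.sum_congr rfl heq2]
  have hrefl : ∑ j ∈ Finset.range (bpsrM a n + 1),
      ((n.choose (bpsrM a n - j) : ℝ) / (n.choose (bpsrM a n) : ℝ))
      = ∑ k ∈ Finset.range (bpsrM a n + 1), ((n.choose k : ℝ) / (n.choose (bpsrM a n) : ℝ)) := by
    have := Finset.sum_range_reflect
      (fun k => (n.choose k : ℝ) / (n.choose (bpsrM a n) : ℝ)) (bpsrM a n + 1)
    simpa using this
  rw [hrefl, ← Finset.sum_div]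
  rfl
end

section
/- Let d ≥ 1, let q_1 > q_2 > … > q_d > 0 be real numbers, and let l_1 > l_2 > … > l_d ≥ 0 be integers. Then 0 < ∑_{π ∈ S_d} sgn(π)·∏_{i=1}^d q_i^{l_{π(i)}} ≤ d!·∏_{i=1}^d q_i^{l_i}. Equivalently, the generalized Vandermonde determinant det(q_i^{l_j})_{1≤i,j≤d} is strictly positive and at most d!·∏_{i=1}^d q_i^{l_i}. -/
open Finset

lemma descartes (n : ℕ) : ∀ (E : Finset ℕ), E.card = n → ∀ (c : ℕ → ℝ), (∀ a ∈ E, c a ≠ 0) →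
    ∀ (s : Finset ℝ), (∀ x ∈ s, 0 < x ∧ ∑ a ∈ E, c a * x ^ a = 0) → E.Nonempty →
    s.card < E.card := by
  induction n using Nat.strong_induction_on with
  | _ n IH =>
    intro E hEn c hc s hs hE
    by_cases h1 : E.card = 1
    · obtain ⟨a, rfl⟩ := Finset.card_eq_one.mp h1
      have hse : s = ∅ := by
        apply Finset.eq_empty_of_forall_notMem
        intro x hx
        obtain ⟨hx0, hxz⟩ := hs x hx
        rw [Finset.sum_singleton] at hxz
        exact (mul_ne_zero (hc a (by simp)) (pow_ne_zero _ (ne_of_gt hx0))) hxz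
      simp [hse]
    · have h2 : 2 ≤ E.card := by
        have := Finset.card_pos.mpr hE; omega
      set m := E.min' hE with hm
      have hmE : m ∈ E := E.min'_mem hE
      have hmle : ∀ a ∈ E, m ≤ a := fun a ha => E.min'_le a ha
      have hinj : Set.InjOn (fun a => a - (m+1)) (E.erase m) := by
        intro a ha b hb hab
        have ha' : m < a := lt_of_le_of_ne (hmle a (Finset.mem_of_mem_erase ha))
          (Ne.symm (Finset.ne_of_mem_erase ha))
        have hb' : m < b := lt_of_le_of_ne (hmle b (Finset.mem_of_mem_erase hb))
          (Ne.symm (Finset.ne_of_mem_erase hb))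
        simp only at hab; omega
      set E' : Finset ℕ := (E.erase m).image (fun a => a - (m+1)) with hE'
      have hcardE' : E'.card = E.card - 1 := by
        rw [hE', Finset.card_image_of_injOn hinj, Finset.card_erase_of_mem hmE]
      set c' : ℕ → ℝ := fun b => c (b + (m+1)) * ((b + 1 : ℕ) : ℝ) with hc'def
      have hc' : ∀ b ∈ E', c' b ≠ 0 := by
        intro b hb
        obtain ⟨a, ha, rfl⟩ := Finset.mem_image.mp hb
        have ha' : m < a := lt_of_le_of_ne (hmle a (Finset.mem_of_mem_erase ha))
          (Ne.symm (Finset.ne_of_mem_erase ha))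
        have : a - (m+1) + (m+1) = a := by omega
        rw [hc'def]
        simp only [this]
        exact mul_ne_zero (hc a (Finset.mem_of_mem_erase ha)) (by positivity)
      set g : ℝ → ℝ := fun x => ∑ a ∈ E, c a * x ^ (a - m) with hgdef
      set g' : ℝ → ℝ := fun x => ∑ a ∈ E, c a * (((a - m : ℕ) : ℝ) * x ^ (a - m - 1)) with hg'def
      have hderiv : ∀ x, HasDerivAt g (g' x) x := fun x =>
        HasDerivAt.fun_sum (fun a _ => (hasDerivAt_pow (a - m) x).const_mul (c a))
      have hg'eq : ∀ x : ℝ, g' x = ∑ b ∈ E', c' b * x ^ b := by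
        intro x
        rw [hE', Finset.sum_image hinj, hg'def]
        have h0 : c m * (((m - m : ℕ) : ℝ) * x ^ (m - m - 1)) = 0 := by simp
        beta_reduce
        rw [← Finset.sum_erase (f := fun a => c a * (((a - m : ℕ) : ℝ) * x ^ (a - m - 1))) E h0]
        apply Finset.sum_congr rfl
        intro a ha
        have ha' : m < a := lt_of_le_of_ne (hmle a (Finset.mem_of_mem_erase ha))
          (Ne.symm (Finset.ne_of_mem_erase ha))
        have e1 : a - (m+1) + (m+1) = a := by omega
        have e2 : a - (m+1) + 1 = a - m := by omega
        have e3 : a - (m+1) = a - m - 1 := by omega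
        show c a * (((a - m : ℕ) : ℝ) * x ^ (a - m - 1)) =
          c (a - (m+1) + (m+1)) * ((a - (m+1) + 1 : ℕ) : ℝ) * x ^ (a - (m+1))
        rw [e1, e2, e3]
        ring
      have hgzero : ∀ x ∈ s, g x = 0 := by
        intro x hx
        obtain ⟨hx0, hxz⟩ := hs x hx
        have : x ^ m * g x = 0 := by
          rw [hgdef, Finset.mul_sum, ← hxz]
          apply Finset.sum_congr rfl
          intro a ha
          rw [← mul_assoc, mul_comm (x ^ m) (c a), mul_assoc, ← pow_add]
          congr 2
          have := hmle a ha
          omega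
        exact (mul_eq_zero.mp this).resolve_left (pow_ne_zero _ (ne_of_gt hx0))
      by_contra hcon
      push_neg at hcon
      set M := s.card with hM
      have hM2 : 2 ≤ M := le_trans h2 hcon
      set σ := s.orderIsoOfFin rfl with hσ
      set X : Fin M → ℝ := fun j => (σ j : ℝ) with hX
      have hXmono : StrictMono X := fun i j hij => by
        exact_mod_cast σ.strictMono hij
      have hXs : ∀ j, X j ∈ s := fun j => (σ j).2
      have hrolle : ∀ i : Fin (M - 1), ∃ y ∈ Set.Ioo (X ⟨i, by omega⟩)
          (X ⟨i + 1, by omega⟩), g' y = 0 := by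
        intro i
        have hab : X ⟨i, by omega⟩ < X ⟨i + 1, by omega⟩ :=
          hXmono (by simp [Fin.lt_def])
        apply exists_hasDerivAt_eq_zero (f := g) (f' := g') hab
        · exact (continuous_finset_sum _ fun a _ =>
            (continuous_const.mul (continuous_pow _))).continuousOn
        · rw [hgzero _ (hXs _), hgzero _ (hXs _)]
        · exact fun x _ => hderiv x
      set t : Fin (M - 1) → ℝ := fun i => Classical.choose (hrolle i) with ht
      have htspec : ∀ i : Fin (M - 1), t i ∈ Set.Ioo (X ⟨i, by omega⟩) (X ⟨i+1, by omega⟩) ∧ g' (t i) = 0 := by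
        intro i
        obtain ⟨h1, h2⟩ := Classical.choose_spec (hrolle i)
        exact ⟨h1, h2⟩
      have htmono : StrictMono t := by
        intro i j hij
        have h1 : t i < X ⟨(i : ℕ) + 1, by omega⟩ := (htspec i).1.2
        have h2 : X ⟨(j : ℕ), by omega⟩ < t j := (htspec j).1.1
        have h3 : X ⟨(i : ℕ) + 1, by omega⟩ ≤ X ⟨(j : ℕ), by omega⟩ :=
          hXmono.monotone (by simp [Fin.le_def]; omega)
        linarith
      set s' : Finset ℝ := Finset.image t Finset.univ with hs'
      have hcards' : s'.card = M - 1 := by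
        rw [hs', Finset.card_image_of_injective _ htmono.injective, Finset.card_univ,
          Fintype.card_fin]
      have hE'card_lt : E'.card < n := by rw [hcardE']; omega
      have hE'ne : E'.Nonempty := Finset.card_pos.mp (by omega)
      have := IH E'.card hE'card_lt E' rfl c' hc' s' ?_ hE'ne
      · omega
      · intro x hx
        obtain ⟨i, _, rfl⟩ := Finset.mem_image.mp hx
        constructor
        · have h0 : 0 < X ⟨(i : ℕ), by omega⟩ := (hs _ (hXs _)).1
          have := (htspec i).1.1
          linarith
        · rw [← hg'eq]
          exact (htspec i).2

lemma alternant_ne_zero (d : ℕ) (q : Fin d → ℝ) (l : Fin d → ℕ)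
    (hq0 : ∀ i, 0 < q i) (hq : Function.Injective q) (hl : Function.Injective l) :
    (∑ π : Equiv.Perm (Fin d), ((Equiv.Perm.sign π : ℤ) : ℝ) * ∏ i, q i ^ l (π i)) ≠ 0 := by
  have hdet : (∑ π : Equiv.Perm (Fin d), ((Equiv.Perm.sign π : ℤ) : ℝ) * ∏ i, q i ^ l (π i))
      = Matrix.det (Matrix.of fun i j : Fin d => q j ^ l i) := by
    rw [Matrix.det_apply']
    apply Finset.sum_congr rfl
    intro π _
    norm_num [Matrix.of_apply]
  intro hzero
  rw [hdet] at hzero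
  obtain ⟨v, hv, hvM⟩ := Matrix.exists_vecMul_eq_zero_iff.mpr hzero
  classical
  set c : ℕ → ℝ := fun a => ∑ i ∈ Finset.univ.filter (fun i => l i = a), v i with hcdef
  have hcl : ∀ i, c (l i) = v i := by
    intro i
    rw [hcdef]
    simp only
    rw [show Finset.univ.filter (fun j => l j = l i) = {i} by
      ext j; simp only [Finset.mem_filter, Finset.mem_univ, true_and, Finset.mem_singleton]
      exact ⟨fun h => hl h, fun h => h ▸ rfl⟩]
    exact Finset.sum_singleton _ _
  set E : Finset ℕ := (Finset.univ.image l).filter (fun a => c a ≠ 0) with hEdef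
  set s : Finset ℝ := Finset.univ.image q with hsdef
  have hcard_s : s.card = d := by
    rw [hsdef, Finset.card_image_of_injective _ hq, Finset.card_univ, Fintype.card_fin]
  have hEcard : E.card ≤ d := by
    calc E.card ≤ (Finset.univ.image l).card := Finset.card_filter_le _ _
    _ ≤ Finset.univ.card := Finset.card_image_le
    _ = d := by rw [Finset.card_univ, Fintype.card_fin]
  have hsum : ∀ x : ℝ, ∑ a ∈ E, c a * x ^ a = ∑ i : Fin d, v i * x ^ l i := by
    intro x
    rw [hEdef, Finset.sum_filter_of_ne (fun a _ h => by
      intro hca; rw [hca, zero_mul] at h; exact h rfl),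
      Finset.sum_image (fun i _ j _ h => hl h)]
    exact Finset.sum_congr rfl fun i _ => by rw [hcl]
  have hroots : ∀ x ∈ s, 0 < x ∧ ∑ a ∈ E, c a * x ^ a = 0 := by
    intro x hx
    obtain ⟨j, _, rfl⟩ := Finset.mem_image.mp hx
    refine ⟨hq0 j, ?_⟩
    rw [hsum]
    have := congrFun hvM j
    simpa [Matrix.vecMul, dotProduct] using this
  have hEne : E.Nonempty := by
    obtain ⟨i, hi⟩ := Function.ne_iff.mp hv
    exact ⟨l i, by
      rw [hEdef]
      simp only [Finset.mem_filter, Finset.mem_image, Finset.mem_univ, true_and]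
      exact ⟨⟨i, rfl⟩, by rw [hcl]; exact hi⟩⟩
  have := descartes E.card E rfl c (fun a ha => (Finset.mem_filter.mp ha).2) s hroots hEne
  omega

lemma alternant_pos_inc : ∀ (d : ℕ) (q : Fin d → ℝ) (l : Fin d → ℕ),
    (∀ i, 0 < q i) → StrictMono q → StrictMono l →
    0 < ∑ π : Equiv.Perm (Fin d), ((Equiv.Perm.sign π : ℤ) : ℝ) * ∏ i, q i ^ l (π i) := by
  intro d
  induction d with
  | zero =>
    intro q l _ _ _
    simp
  | succ e IH =>
    intro q l hq0 hqm hlm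
    classical
    set S : ℝ → ℝ := fun t => ∑ π : Equiv.Perm (Fin (e + 1)),
      ((Equiv.Perm.sign π : ℤ) : ℝ) *
        ((∏ i : Fin e, q i.succ ^ l (π i.succ)) * t ^ (l (π 0) - l 0)) with hSdef
    have hl0 : ∀ j : Fin (e + 1), l 0 ≤ l j := fun j => hlm.monotone (Fin.zero_le j)
    have key : ∀ t : ℝ, t ^ l 0 * S t = ∑ π : Equiv.Perm (Fin (e + 1)),
        ((Equiv.Perm.sign π : ℤ) : ℝ) *
          ∏ i, (Fin.cons t (fun i : Fin e => q i.succ) : Fin (e+1) → ℝ) i ^ l (π i) := by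
      intro t
      rw [hSdef]
      simp only
      rw [Finset.mul_sum]
      apply Finset.sum_congr rfl
      intro π _
      rw [Fin.prod_univ_succ]
      simp only [Fin.cons_zero, Fin.cons_succ]
      have h1 : l 0 + (l (π 0) - l 0) = l (π 0) := Nat.add_sub_cancel' (hl0 (π 0))
      have h2 : t ^ l (π 0) = t ^ l 0 * t ^ (l (π 0) - l 0) := by rw [← pow_add, h1]
      rw [h2]
      ring
    have hScont : Continuous S := by
      rw [hSdef]
      exact continuous_finset_sum _ fun π _ =>
        continuous_const.mul (continuous_const.mul (continuous_pow _))
    have hS0 : 0 < S 0 := by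
      have hS0eq : S 0 = ∑ σ : Equiv.Perm (Fin e),
          ((Equiv.Perm.sign σ : ℤ) : ℝ) *
            ∏ i : Fin e, q i.succ ^ (l ∘ Fin.succ) (σ i) := by
        rw [hSdef]
        simp only
        rw [← Equiv.sum_comp Equiv.Perm.decomposeFin.symm, Fintype.sum_prod_type,
          Fin.sum_univ_succ]
        have hz : ∀ p : Fin (e + 1), p ≠ 0 → (∑ σ : Equiv.Perm (Fin e),
            ((Equiv.Perm.sign (Equiv.Perm.decomposeFin.symm (p, σ)) : ℤ) : ℝ) *
            ((∏ i : Fin e, q i.succ ^ l ((Equiv.Perm.decomposeFin.symm (p, σ)) i.succ)) *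
              (0:ℝ) ^ (l ((Equiv.Perm.decomposeFin.symm (p, σ)) 0) - l 0))) = 0 := by
          intro p hp
          apply Finset.sum_eq_zero
          intro σ _
          rw [Equiv.Perm.decomposeFin_symm_apply_zero]
          have hlt : l 0 < l p := hlm (Fin.pos_of_ne_zero hp)
          rw [zero_pow (by omega)]
          ring
        rw [Finset.sum_eq_zero (fun p (_ : p ∈ Finset.univ) => hz p.succ (Fin.succ_ne_zero p)),
          add_zero]
        apply Finset.sum_congr rfl
        intro σ _
        rw [Equiv.Perm.decomposeFin_symm_apply_zero]
        simp only [Equiv.Perm.decomposeFin.symm_sign, if_pos rfl, one_mul,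
          Equiv.Perm.decomposeFin_symm_apply_succ, Equiv.swap_self, Equiv.refl_apply,
          Nat.sub_self, pow_zero, mul_one, Function.comp]
        norm_num
      rw [hS0eq]
      exact IH (fun i => q i.succ) (l ∘ Fin.succ) (fun i => hq0 _)
        (fun i j hij => hqm (Fin.succ_lt_succ_iff.mpr hij))
        (fun i j hij => hlm (Fin.succ_lt_succ_iff.mpr hij))
    rcases Nat.eq_zero_or_pos e with rfl | he
    · -- d = 1 : single permutation
      have hsub : ∀ π : Equiv.Perm (Fin (0+1)), π = 1 := fun π => by
        ext i
        omega
      rw [show (Finset.univ : Finset (Equiv.Perm (Fin (0+1)))) = {1} from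
        Finset.eq_singleton_iff_unique_mem.mpr ⟨Finset.mem_univ _, fun π _ => hsub π⟩,
        Finset.sum_singleton]
      simp only [Equiv.Perm.sign_one, Equiv.Perm.one_apply]
      norm_num
      exact Finset.prod_pos fun i _ => pow_pos (hq0 i) _
    · -- d = e + 1 with e ≥ 1
      set j1 : Fin (e + 1) := ⟨1, by omega⟩ with hj1
      have h01 : (0 : Fin (e + 1)) < j1 := by
        rw [Fin.lt_def]; simp [hj1]
      have hq01 : q 0 < q j1 := hqm h01
      have hSne : ∀ t : ℝ, 0 < t → t < q j1 → S t ≠ 0 := by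
        intro t ht0 ht1
        have hmono : StrictMono (Fin.cons t (fun i : Fin e => q i.succ) : Fin (e+1) → ℝ) := by
          intro i j hij
          induction j using Fin.cases with
          | zero => exact absurd hij (Fin.not_lt_zero i)
          | succ j' =>
            induction i using Fin.cases with
            | zero =>
              simp only [Fin.cons_zero, Fin.cons_succ]
              refine lt_of_lt_of_le ht1 (hqm.monotone ?_)
              rw [Fin.le_def]
              simp [hj1, Fin.val_succ]
            | succ i' =>
              simp only [Fin.cons_succ]
              exact hqm hij
        have hA := alternant_ne_zero (e+1) (Fin.cons t (fun i : Fin e => q i.succ)) l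
          (fun i => by
            induction i using Fin.cases with
            | zero => simpa using ht0
            | succ i' => simpa using hq0 i'.succ)
          hmono.injective hlm.injective
        intro hS
        apply hA
        rw [← key t, hS, mul_zero]
      have hSq0 : 0 < S (q 0) := by
        rcases lt_trichotomy (S (q 0)) 0 with hneg | hzero | hpos
        · exfalso
          have hmem : (0:ℝ) ∈ Set.Ioo (S (q 0)) (S 0) := ⟨hneg, hS0⟩
          obtain ⟨z, hz1, hz2⟩ :=
            intermediate_value_Ioo' (le_of_lt (hq0 0)) hScont.continuousOn hmem
          exact hSne z hz1.1 (lt_trans hz1.2 hq01) hz2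
        · exact absurd hzero (hSne (q 0) (hq0 0) hq01)
        · exact hpos
      have hpos : 0 < q 0 ^ l 0 * S (q 0) := mul_pos (pow_pos (hq0 0) _) hSq0
      rw [key (q 0)] at hpos
      have hcons : (Fin.cons (q 0) (fun i : Fin e => q i.succ) : Fin (e+1) → ℝ) = q :=
        Fin.cons_self_tail q
      rw [hcons] at hpos
      exact hpos

/-- **Bounds on the generalized Vandermonde alternant** (Appendix E).
For `q₁ > q₂ > … > q_d > 0` and integers `l₁ > l₂ > … > l_d ≥ 0`, the alternant
`∑_{π ∈ S_d} sgn(π) ∏ᵢ qᵢ^{l_{π(i)}}` is strictly positive and at most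
`d! ∏ᵢ qᵢ^{lᵢ}`. -/
theorem alternant_pos_and_le (d : ℕ) (hd : 1 ≤ d) (q : Fin d → ℝ) (l : Fin d → ℕ)
    (hqpos : ∀ i, 0 < q i)
    (hq : ∀ i j : Fin d, i < j → q j < q i)
    (hl : ∀ i j : Fin d, i < j → l j < l i) :
    0 < ∑ π : Equiv.Perm (Fin d),
        ((Equiv.Perm.sign π : ℤ) : ℝ) * ∏ i, q i ^ l (π i) ∧
      ∑ π : Equiv.Perm (Fin d),
        ((Equiv.Perm.sign π : ℤ) : ℝ) * ∏ i, q i ^ l (π i)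
        ≤ (d.factorial : ℝ) * ∏ i, q i ^ l i := by
  constructor
  · -- positivity via the increasing version
    have hrev : ∑ π : Equiv.Perm (Fin d), ((Equiv.Perm.sign π : ℤ) : ℝ) * ∏ i, q i ^ l (π i)
        = ∑ π : Equiv.Perm (Fin d), ((Equiv.Perm.sign π : ℤ) : ℝ) *
            ∏ i, (q ∘ Fin.rev) i ^ (l ∘ Fin.rev) (π i) := by
      rw [← Equiv.sum_comp (Equiv.permCongr (Fin.revPerm : Equiv.Perm (Fin d)))
        (fun π : Equiv.Perm (Fin d) => ((Equiv.Perm.sign π : ℤ) : ℝ) *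
          ∏ i, (q ∘ Fin.rev) i ^ (l ∘ Fin.rev) (π i))]
      apply Finset.sum_congr rfl
      intro π _
      rw [Equiv.Perm.sign_permCongr]
      congr 1
      refine Fintype.prod_bijective Fin.rev (Fin.rev_involutive.bijective) _ _ (fun i => ?_)
      simp only [Equiv.permCongr_apply, Function.comp_apply, Fin.revPerm_symm,
        Fin.revPerm_apply, Fin.rev_rev]
    rw [hrev]
    exact alternant_pos_inc d (q ∘ Fin.rev) (l ∘ Fin.rev) (fun i => hqpos _)
      (fun i j hij => hq _ _ (Fin.rev_lt_rev.mpr hij))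
      (fun i j hij => hl _ _ (Fin.rev_lt_rev.mpr hij))
  · -- upper bound via rearrangement
    have hprodpos : ∀ π : Equiv.Perm (Fin d), (0:ℝ) < ∏ i, q i ^ l (π i) :=
      fun π => Finset.prod_pos fun i _ => pow_pos (hqpos i) _
    have hterm : ∀ π : Equiv.Perm (Fin d), ∏ i, q i ^ l (π i) ≤ ∏ i, q i ^ l i := by
      intro π
      have hmono : Monovary (fun i => (l i : ℝ)) (fun i => Real.log (q i)) := by
        intro i j hij
        have hqij : q i < q j := (Real.log_lt_log_iff (hqpos i) (hqpos j)).mp hij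
        have hji : j < i := by
          rcases lt_trichotomy i j with h | h | h
          · exact absurd (hq i j h) (not_lt.mpr (le_of_lt hqij))
          · exact absurd (h ▸ hqij) (lt_irrefl _)
          · exact h
        beta_reduce
        exact_mod_cast le_of_lt (hl j i hji)
      have hsum := hmono.sum_comp_perm_smul_le_sum_smul (σ := π)
      simp only [smul_eq_mul] at hsum
      have hlog1 : Real.log (∏ i, q i ^ l (π i)) = ∑ i, (l (π i) : ℝ) * Real.log (q i) := by
        rw [Real.log_prod (fun i _ => (pow_pos (hqpos i) _).ne')]
        exact Finset.sum_congr rfl fun i _ => Real.log_pow _ _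
      have hlog2 : Real.log (∏ i, q i ^ l i) = ∑ i, (l i : ℝ) * Real.log (q i) := by
        rw [Real.log_prod (fun i _ => (pow_pos (hqpos i) _).ne')]
        exact Finset.sum_congr rfl fun i _ => Real.log_pow _ _
      have hpos1 : (0:ℝ) < ∏ i, q i ^ l i := Finset.prod_pos fun i _ => pow_pos (hqpos i) _
      rw [← Real.log_le_log_iff (hprodpos π) hpos1, hlog1, hlog2]
      exact hsum
    have hterm' : ∀ π ∈ (Finset.univ : Finset (Equiv.Perm (Fin d))),
        ((Equiv.Perm.sign π : ℤ) : ℝ) * ∏ i, q i ^ l (π i) ≤ ∏ i, q i ^ l i := by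
      intro π _
      rcases Int.units_eq_one_or (Equiv.Perm.sign π) with h | h
      · rw [h]
        simpa using hterm π
      · rw [h]
        have h1 := hprodpos π
        have hpos1 : (0:ℝ) < ∏ i, q i ^ l i := Finset.prod_pos fun i _ => pow_pos (hqpos i) _
        simp only [Units.val_neg, Units.val_one, Int.cast_neg, Int.cast_one, neg_mul, one_mul]
        linarith
    calc ∑ π : Equiv.Perm (Fin d), ((Equiv.Perm.sign π : ℤ) : ℝ) * ∏ i, q i ^ l (π i)
        ≤ (Finset.univ : Finset (Equiv.Perm (Fin d))).card • ∏ i, q i ^ l i :=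
          Finset.sum_le_card_nsmul _ _ _ hterm'
      _ = (d.factorial : ℝ) * ∏ i, q i ^ l i := by
          rw [Finset.card_univ, Fintype.card_perm, Fintype.card_fin, nsmul_eq_mul]
end

section
/- Let L > 0, let f : ℝ → ℝ be continuously differentiable on [0, L], nondecreasing on [0, L], with f(0) = 0 and f(L) = 1, and let λ > 1 be a real number. If a real number n satisfies n ≥ (−log₂(1 − 1/λ))·max_{t ∈ [0,L]} f′(t), then for all x, y with 0 ≤ y ≤ x ≤ L one has f(x) − f(y) ≤ λ·(1 − 2^{−n(x−y)}). -/
/-- **Threshold for non-asymptotic optimality under the weighted-sum measure**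
(Theorem `weitht-semi-asymptotic`).  If `f` is continuously differentiable and
nondecreasing on `[0, L]` with `f 0 = 0`, `f L = 1`, and `λ > 1`, then as soon as
`n ≥ (−log₂(1 − 1/λ)) · max_{t ∈ [0,L]} f'(t)`, one has
`f x − f y ≤ λ (1 − 2^{−n(x−y)})` for all `0 ≤ y ≤ x ≤ L`. -/
theorem weighted_sum_threshold (L : ℝ) (hL : 0 < L) (f f' : ℝ → ℝ)
    (hderiv : ∀ t ∈ Set.Icc (0 : ℝ) L, HasDerivWithinAt f (f' t) (Set.Icc (0 : ℝ) L) t)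
    (hcont : ContinuousOn f' (Set.Icc (0 : ℝ) L))
    (hmono : MonotoneOn f (Set.Icc (0 : ℝ) L))
    (hf0 : f 0 = 0) (hfL : f L = 1)
    (lam : ℝ) (hlam : 1 < lam)
    (n : ℝ) (hn : (-Real.logb 2 (1 - 1 / lam)) * sSup (f' '' Set.Icc (0 : ℝ) L) ≤ n) :
    ∀ x y : ℝ, 0 ≤ y → y ≤ x → x ≤ L →
      f x - f y ≤ lam * (1 - (2 : ℝ) ^ (-(n * (x - y)))) := by
  intro x y hy hyx hxL
  have hlam0 : (0:ℝ) < lam := lt_trans one_pos hlam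
  have h1lam : (0:ℝ) < 1 - 1/lam := by
    have : 1/lam < 1 := by rw [div_lt_one hlam0]; exact hlam
    linarith
  have h1lam1 : 1 - 1/lam < 1 := by
    have : 0 < 1/lam := by positivity
    linarith
  set S := Set.Icc (0:ℝ) L with hSdef
  set M := sSup (f' '' S) with hMdef
  set c := -Real.logb 2 (1 - 1/lam) with hcdef
  have hc : 0 < c := by
    have h := Real.logb_neg (b := 2) (by norm_num) h1lam h1lam1
    show (0:ℝ) < -Real.logb 2 (1 - 1/lam)
    linarith
  have h2c : (2:ℝ) ^ (-c) = 1 - 1/lam := by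
    rw [hcdef, neg_neg]
    exact Real.rpow_logb (by norm_num) (by norm_num) h1lam
  -- bound all derivative values by M
  have hbdd : BddAbove (f' '' S) :=
    (isCompact_Icc.image_of_continuousOn hcont).bddAbove
  have hM : ∀ t ∈ S, f' t ≤ M := fun t ht => le_csSup hbdd ⟨t, ht, rfl⟩
  have hfc : ContinuousOn f S := fun t ht => (hderiv t ht).continuousWithinAt
  -- derivatives at interior points
  have hint : ∀ t ∈ interior S, HasDerivAt f (f' t) t := by
    intro t ht
    rw [hSdef, interior_Icc] at ht
    exact (hderiv t (Set.mem_Icc_of_Ioo ht)).hasDerivAt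
      (Icc_mem_nhds ht.1 ht.2)
  -- MVT-type inequality
  have key : ∀ a b, a ∈ S → b ∈ S → a ≤ b → f b - f a ≤ M * (b - a) := by
    intro a b ha hb hab
    refine (convex_Icc 0 L).image_sub_le_mul_sub_of_deriv_le hfc ?_ ?_ a ha b hb hab
    · intro t ht
      exact (hint t ht).differentiableAt.differentiableWithinAt
    · intro t ht
      rw [(hint t ht).deriv]
      exact hM t (interior_subset ht)
  have hyS : y ∈ S := ⟨hy, le_trans hyx hxL⟩
  have hxS : x ∈ S := ⟨le_trans hy hyx, hxL⟩
  have h0S : (0:ℝ) ∈ S := ⟨le_refl 0, le_of_lt hL⟩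
  have hLS : L ∈ S := ⟨le_of_lt hL, le_refl L⟩
  have hM0 : 0 < M := by
    have h1 : f L - f 0 ≤ M * (L - 0) := key 0 L h0S hLS (le_of_lt hL)
    rw [hf0, hfL] at h1
    nlinarith
  have hn0 : 0 ≤ n := le_trans (by positivity) hn
  have hd : 0 ≤ x - y := by linarith
  have hle1 : f x - f y ≤ 1 := by
    have h1 := hmono h0S hyS hy
    have h2 := hmono hxS hLS hxL
    rw [hf0] at h1; rw [hfL] at h2
    linarith
  have hleM : f x - f y ≤ M * (x - y) := key y x hyS hxS hyx
  set s := n * (x - y) with hsdef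
  have hs0 : 0 ≤ s := mul_nonneg hn0 hd
  rcases le_or_gt c s with hcs | hsc
  · -- large exponent: RHS ≥ 1
    have h2s : (2:ℝ) ^ (-s) ≤ 1 - 1/lam := by
      rw [← h2c]
      exact Real.rpow_le_rpow_of_exponent_le one_le_two (by linarith)
    have : 1 ≤ lam * (1 - (2:ℝ) ^ (-s)) := by
      have : lam * (1/lam) ≤ lam * (1 - (2:ℝ)^(-s)) := by
        apply mul_le_mul_of_nonneg_left (by linarith) (le_of_lt hlam0)
      rwa [mul_one_div, div_self (ne_of_gt hlam0)] at this
    linarith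
  · -- small exponent: use convexity of exp
    set t := s / c with htdef
    have ht0 : 0 ≤ t := div_nonneg hs0 (le_of_lt hc)
    have ht1 : t ≤ 1 := by
      rw [htdef, div_le_one hc]; exact le_of_lt hsc
    have htc : t * c = s := by
      rw [htdef]; field_simp
    have hconv := convexOn_exp.2 (Set.mem_univ (0:ℝ))
      (Set.mem_univ (-(c * Real.log 2))) (by linarith : (0:ℝ) ≤ 1 - t) ht0 (by ring)
    simp only [smul_eq_mul, mul_zero, Real.exp_zero, mul_one, zero_add] at hconv
    have he1 : Real.exp (t * -(c * Real.log 2)) = (2:ℝ) ^ (-s) := by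
      rw [Real.rpow_def_of_pos (by norm_num : (0:ℝ) < 2)]
      congr 1
      rw [← htc]; ring
    have he2 : Real.exp (-(c * Real.log 2)) = (2:ℝ) ^ (-c) := by
      rw [Real.rpow_def_of_pos (by norm_num : (0:ℝ) < 2)]
      congr 1; ring
    rw [he1, he2, h2c] at hconv
    -- hconv : 2^(-s) ≤ (1 - t) + t * (1 - 1/lam)
    have hrhs : t ≤ lam * (1 - (2:ℝ) ^ (-s)) := by
      have : lam * (1 - ((1 - t) + t * (1 - 1/lam))) ≤ lam * (1 - (2:ℝ)^(-s)) := by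
        apply mul_le_mul_of_nonneg_left (by linarith) (le_of_lt hlam0)
      have heq : lam * (1 - ((1 - t) + t * (1 - 1/lam))) = t := by
        field_simp; ring
      linarith
    have hMd : M * (x - y) ≤ t := by
      rw [htdef, le_div_iff₀ hc, hsdef]
      calc M * (x - y) * c = (c * M) * (x - y) := by ring
        _ ≤ n * (x - y) := mul_le_mul_of_nonneg_right hn hd
    linarith
end

section
/- Let r be a real number with 0 < r < 1, let x₀ ∈ ℝ, and let f : ℝ → ℝ be bounded on [x₀, x₀ + 1] and continuous at x₀. Then lim_{n→∞} (1 − r)·∑_{l=0}^{⌊√n⌋} r^l·f(x₀ + l/n) = f(x₀). -/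
open Finset Filter

lemma geom_id_aux (r : ℝ) (hr : r ≠ 1) (m : ℕ) :
    (1 - r) * ∑ i ∈ Finset.range m, r ^ i = 1 - r ^ m := by
  have h : r - 1 ≠ 0 := sub_ne_zero.mpr hr
  rw [geom_sum_eq hr]
  field_simp
  ring

lemma sqrt_floor_tendsto : Tendsto (fun n : ℕ => ⌊Real.sqrt n⌋₊) atTop atTop := by
  apply tendsto_nat_floor_atTop.comp
  apply tendsto_atTop_atTop.mpr
  intro b
  refine ⟨⌈b ^ 2⌉₊, fun n hn => ?_⟩
  have h1 : (b : ℝ) ^ 2 ≤ (n : ℝ) := le_trans (Nat.le_ceil _) (by exact_mod_cast hn)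
  calc b ≤ |b| := le_abs_self b
    _ = Real.sqrt (b ^ 2) := (Real.sqrt_sq_eq_abs b).symm
    _ ≤ Real.sqrt n := Real.sqrt_le_sqrt h1

set_option maxHeartbeats 1000000 in
/-- **Geometric-averaging limit** (equation `sum-p/q`, Appendix D).
For `0 < r < 1` and `f` bounded on `[x₀, x₀ + 1]` and continuous at `x₀`,
`lim_{n→∞} (1 − r) ∑_{l=0}^{⌊√n⌋} r^l f(x₀ + l/n) = f x₀`. -/
theorem geometric_averaging_limit (r : ℝ) (hr0 : 0 < r) (hr1 : r < 1)
    (x₀ : ℝ) (f : ℝ → ℝ)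
    (hbound : ∃ M : ℝ, ∀ x ∈ Set.Icc x₀ (x₀ + 1), |f x| ≤ M)
    (hcont : ContinuousAt f x₀) :
    Tendsto (fun n : ℕ =>
        (1 - r) * ∑ l ∈ Finset.range (⌊Real.sqrt n⌋₊ + 1),
          r ^ l * f (x₀ + (l : ℝ) / n))
      atTop (nhds (f x₀)) := by
  set K : ℕ → ℕ := fun n => ⌊Real.sqrt n⌋₊ with hKdef
  have hpow : Tendsto (fun n : ℕ => r ^ (K n + 1)) atTop (nhds 0) :=
    (tendsto_pow_atTop_nhds_zero_of_lt_one hr0.le hr1).comp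
      ((tendsto_add_atTop_nat 1).comp sqrt_floor_tendsto)
  have hB : Tendsto (fun n : ℕ => f x₀ - r ^ (K n + 1) * f x₀) atTop (nhds (f x₀)) := by
    have h2 : Tendsto (fun n : ℕ => f x₀ - r ^ (K n + 1) * f x₀) atTop (nhds (f x₀ - 0 * f x₀)) :=
      tendsto_const_nhds.sub (hpow.mul_const (f x₀))
    rw [zero_mul, sub_zero] at h2
    exact h2
  have hA : Tendsto (fun n : ℕ =>
      (1 - r) * ∑ l ∈ Finset.range (K n + 1),
        r ^ l * (f (x₀ + (l : ℝ) / n) - f x₀)) atTop (nhds 0) := by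
    rw [Metric.tendsto_atTop]
    intro ε hε
    obtain ⟨δ, hδ, hfδ⟩ := Metric.continuousAt_iff.mp hcont (ε / 2) (by linarith)
    refine ⟨⌈(1 / δ) ^ 2⌉₊ + 1, fun n hn => ?_⟩
    have hn0 : 0 < n := lt_of_lt_of_le (Nat.succ_pos _) hn
    have hnR : ((1 : ℝ) / δ) ^ 2 < (n : ℝ) := by
      have := Nat.le_ceil ((1 / δ) ^ 2)
      have h2 : ((⌈(1 / δ) ^ 2⌉₊ : ℝ) + 1) ≤ (n : ℝ) := by exact_mod_cast hn
      linarith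
    have hsq : 1 / δ < Real.sqrt n := by
      calc 1 / δ ≤ |1 / δ| := le_abs_self _
        _ = Real.sqrt ((1 / δ) ^ 2) := (Real.sqrt_sq_eq_abs _).symm
        _ < Real.sqrt n := Real.sqrt_lt_sqrt (sq_nonneg _) hnR
    have hsn : 0 < Real.sqrt n := lt_trans (by positivity) hsq
    -- each term is small
    have hsmall : ∀ l ∈ Finset.range (K n + 1),
        |f (x₀ + (l : ℝ) / n) - f x₀| ≤ ε / 2 := by
      intro l hl
      rw [Finset.mem_range, Nat.lt_succ_iff] at hl
      have hlR : (l : ℝ) ≤ Real.sqrt n :=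
        (Nat.le_floor_iff (Real.sqrt_nonneg _)).mp hl
      have hln : (l : ℝ) / n < δ := by
        have hnpos : (0 : ℝ) < n := by exact_mod_cast hn0
        have h1 : (l : ℝ) / n ≤ Real.sqrt n / n := by gcongr
        have h2 : Real.sqrt n / n = 1 / Real.sqrt n := by
          rw [eq_div_iff (ne_of_gt hsn), div_mul_eq_mul_div,
            Real.mul_self_sqrt (le_of_lt hnpos), div_self (ne_of_gt hnpos)]
        have h3 : 1 / Real.sqrt n < δ := by
          rw [div_lt_iff₀ hsn]
          calc (1 : ℝ) = δ * (1 / δ) := by field_simp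
            _ < δ * Real.sqrt n := by
              exact mul_lt_mul_of_pos_left hsq hδ
        linarith
      have hd : dist (x₀ + (l : ℝ) / n) x₀ < δ := by
        rw [Real.dist_eq]
        have : |x₀ + (l : ℝ) / n - x₀| = (l : ℝ) / n := by
          rw [add_sub_cancel_left, abs_of_nonneg (by positivity)]
        rw [this]; exact hln
      have := hfδ hd
      rw [Real.dist_eq] at this
      linarith
    rw [Real.dist_eq, sub_zero]
    have h1r : (0 : ℝ) < 1 - r := by linarith
    have hsum : |∑ l ∈ Finset.range (K n + 1), r ^ l * (f (x₀ + (l : ℝ) / n) - f x₀)|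
        ≤ ∑ l ∈ Finset.range (K n + 1), r ^ l * (ε / 2) := by
      refine le_trans (Finset.abs_sum_le_sum_abs _ _) (Finset.sum_le_sum ?_)
      intro l hl
      rw [abs_mul, abs_of_nonneg (pow_nonneg hr0.le l)]
      exact mul_le_mul_of_nonneg_left (hsmall l hl) (pow_nonneg hr0.le l)
    have hrm : (0 : ℝ) ≤ r ^ (K n + 1) := pow_nonneg hr0.le _
    calc |(1 - r) * ∑ l ∈ Finset.range (K n + 1), r ^ l * (f (x₀ + (l : ℝ) / n) - f x₀)|
        = (1 - r) * |∑ l ∈ Finset.range (K n + 1), r ^ l * (f (x₀ + (l : ℝ) / n) - f x₀)| := by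
          rw [abs_mul, abs_of_pos h1r]
      _ ≤ (1 - r) * ∑ l ∈ Finset.range (K n + 1), r ^ l * (ε / 2) := by
          exact mul_le_mul_of_nonneg_left hsum h1r.le
      _ = ((1 - r) * ∑ l ∈ Finset.range (K n + 1), r ^ l) * (ε / 2) := by
          rw [← Finset.sum_mul, mul_assoc]
      _ = (1 - r ^ (K n + 1)) * (ε / 2) := by rw [geom_id_aux r hr1.ne _]
      _ ≤ ε / 2 := by nlinarith
      _ < ε := by linarith
  have key : ∀ n : ℕ,
      (1 - r) * ∑ l ∈ Finset.range (K n + 1), r ^ l * (f (x₀ + (l : ℝ) / n) - f x₀)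
        + (f x₀ - r ^ (K n + 1) * f x₀)
      = (1 - r) * ∑ l ∈ Finset.range (K n + 1), r ^ l * f (x₀ + (l : ℝ) / n) := by
    intro n
    have h1 : ∑ l ∈ Finset.range (K n + 1), r ^ l * (f (x₀ + (l : ℝ) / n) - f x₀)
        = (∑ l ∈ Finset.range (K n + 1), r ^ l * f (x₀ + (l : ℝ) / n))
          - (∑ l ∈ Finset.range (K n + 1), r ^ l) * f x₀ := by
      rw [Finset.sum_mul, ← Finset.sum_sub_distrib]
      exact Finset.sum_congr rfl fun l _ => by ring
    have h2 := geom_id_aux r hr1.ne (K n + 1)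
    rw [h1]
    linear_combination (-(f x₀)) * h2
  have h := hA.add hB
  rw [zero_add] at h
  exact h.congr key
end
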